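/- First-order perturbation operator of the ABOBA splitting: let 𝔸 be a complete normed algebra over ℝ (a Banach algebra), A, B ∈ 𝔸, and O₁, …, O_m ∈ 𝔸. Then, as t → 0, ‖ exp((t/2) A) · exp((t/2) B) · exp(t O₁) ⋯ exp(t O_m) · exp((t/2) B) · exp((t/2) A) − exp( t (A + B + O₁ + ⋯ + O_m) + (t²/2) Σ_{1 ≤ k < l ≤ m} (O_k O_l − O_l O_k) ) ‖ = O(t³). In particular, the second-order term in the logarithm of the ABOBA propagator involves only the commutators among the pairwise operators O_k (as in the operator L†_{1,ABOBA} of the ABOBA method), with no contribution from A or B. -/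

import Mathlib

/-!
Say `f` has second-order expansion `(p, q)` if `f t = 1 + t p + t² q + O(t³)` near `0`.
Such expansions multiply like truncated power series, and `exp (t X + t² D)` has expansion
`(X, D + X²/2)`. Hence `∏ₖ exp (t Oₖ)` has expansion `(S, (S² + Σ_{k<l} [Oₖ, Oₗ])/2)` with
`S = Σₖ Oₖ`. An expansion of the form `(p, p²/2 + R)`, i.e. that of `exp (t p + t² R)`, keeps
its remainder `R` under the palindromic conjugation `exp (t X/2) · _ · exp (t X/2)`, which only
replaces `p` by `X + p`. Conjugating by `B` and then by `A`, the ABOBA propagator gets the same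
expansion as `exp (t (A + B + S) + (t²/2) Σ_{k<l} [Oₖ, Oₗ])`, so their difference is `O(t³)`.
-/

open Asymptotics Filter Topology NormedSpace

lemma isBigO_smul_self_of_tendsto {α 𝕜 E : Type*} [NormedField 𝕜] [SeminormedAddCommGroup E]
    [NormedSpace 𝕜 E] {l : Filter α} (φ : α → 𝕜) {g : α → E} {c : E} (hg : Tendsto g l (𝓝 c)) :
    (fun x => φ x • g x) =O[l] φ := by
  simpa using (isBigO_refl φ l).smul (hg.isBigO_one 𝕜)

section Expansion

variable {𝕜 𝔸 : Type*} [NormedField 𝕜] [NormedRing 𝔸] [NormedAlgebra 𝕜 𝔸]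

def HasSecondOrderExpansion (f : 𝕜 → 𝔸) (p q : 𝔸) : Prop :=
  (fun t => f t - (1 + t • p + t ^ 2 • q)) =O[𝓝 0] fun t => t ^ 3

lemma quadratic_isBigO_one (p q : 𝔸) :
    (fun t : 𝕜 => 1 + t • p + t ^ 2 • q) =O[𝓝 0] fun _ => (1 : 𝕜) :=
  (Continuous.tendsto (by fun_prop) 0).isBigO_one 𝕜

lemma hasSecondOrderExpansion_one : HasSecondOrderExpansion (fun _ : 𝕜 => (1 : 𝔸)) 0 0 := by
  simpa [HasSecondOrderExpansion] using isBigO_zero (fun t : 𝕜 => t ^ 3) (𝓝 0)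

namespace HasSecondOrderExpansion

variable {f g : 𝕜 → 𝔸} {p q p' q' : 𝔸}

lemma isBigO_one (h : HasSecondOrderExpansion f p q) : f =O[𝓝 0] fun _ => (1 : 𝕜) := by
  have hcube : Tendsto (fun t : 𝕜 => t ^ 3) (𝓝 0) (𝓝 0) := by
    simpa using (continuous_pow 3).tendsto (0 : 𝕜)
  simpa using (h.trans (hcube.isBigO_one 𝕜)).add (quadratic_isBigO_one p q)

lemma mul (hf : HasSecondOrderExpansion f p q) (hg : HasSecondOrderExpansion g p' q') :
    HasSecondOrderExpansion (fun t => f t * g t) (p + p') (q + q' + p * p') := by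
  have hcross : ∀ t : 𝕜, (1 + t • p + t ^ 2 • q) * (1 + t • p' + t ^ 2 • q') -
      (1 + t • (p + p') + t ^ 2 • (q + q' + p * p')) =
        t ^ 3 • (p * q' + q * p' + t • (q * q')) := by
    intro t
    simp only [mul_add, add_mul, smul_mul_assoc, mul_smul_comm, smul_add, smul_smul, mul_one,
      one_mul]
    match_scalars <;> ring
  have hrest : (fun t : 𝕜 => t ^ 3 • (p * q' + q * p' + t • (q * q'))) =O[𝓝 0] fun t => t ^ 3 :=
    isBigO_smul_self_of_tendsto _ (Continuous.tendsto (by fun_prop) 0)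
  have hleft : (fun t => (f t - (1 + t • p + t ^ 2 • q)) * g t) =O[𝓝 0] fun t => t ^ 3 := by
    simpa using IsBigO.mul hf hg.isBigO_one
  have hright : (fun t => (1 + t • p + t ^ 2 • q) * (g t - (1 + t • p' + t ^ 2 • q')))
      =O[𝓝 0] fun t => t ^ 3 := by
    simpa using IsBigO.mul (quadratic_isBigO_one p q) hg
  refine ((hleft.add hright).add (hrest.congr_left fun t => (hcross t).symm)).congr_left
    fun t => ?_
  noncomm_ring

lemma isBigO_sub (hf : HasSecondOrderExpansion f p q) (hg : HasSecondOrderExpansion g p q) :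
    (fun t => f t - g t) =O[𝓝 0] fun t => t ^ 3 := by
  simpa using hf.sub hg

end HasSecondOrderExpansion

end Expansion

section OrderedCommutatorSum

variable {𝔸 : Type*} [Ring 𝔸]

def orderedCommutatorSum {m : ℕ} (O : Fin m → 𝔸) : 𝔸 :=
  ∑ k, ∑ l, if k < l then O k * O l - O l * O k else 0

lemma orderedCommutatorSum_succ {m : ℕ} (O : Fin (m + 1) → 𝔸) :
    orderedCommutatorSum O = O 0 * (∑ k : Fin m, O k.succ) - (∑ k : Fin m, O k.succ) * O 0 +
      orderedCommutatorSum fun k => O k.succ := by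
  simp only [orderedCommutatorSum, Fin.sum_univ_succ, if_false, zero_add, Fin.succ_pos, if_true,
    Fin.succ_lt_succ_iff, Fin.not_lt_zero]
  rw [Finset.sum_sub_distrib, Finset.mul_sum, Finset.sum_mul]

end OrderedCommutatorSum

section Exponential

variable {𝕜 𝔸 : Type*} [RCLike 𝕜] [NormedRing 𝔸] [NormedAlgebra 𝕜 𝔸] [CompleteSpace 𝔸]

variable (𝕜) in
lemma exp_sub_taylor_two_isBigO :
    (fun y : 𝔸 => exp y - (1 + y + (2⁻¹ : 𝕜) • (y * y))) =O[𝓝 0] fun y => ‖y‖ ^ 3 := by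
  have h := (exp_hasFPowerSeriesAt_zero (𝕂 := 𝕜) (𝔸 := 𝔸)).isBigO_sub_partialSum_pow 3
  simp only [zero_add] at h
  refine h.congr_left fun y => ?_
  simp [FormalMultilinearSeries.partialSum, Finset.sum_range_succ, expSeries_apply_eq, pow_two]

lemma hasSecondOrderExpansion_exp (X D : 𝔸) :
    HasSecondOrderExpansion (fun t : 𝕜 => exp (t • X + t ^ 2 • D)) X
      (D + (2⁻¹ : 𝕜) • (X * X)) := by
  set y : 𝕜 → 𝔸 := fun t => t • (X + t • D) with hy
  have hyt : Tendsto (fun t : 𝕜 => X + t • D) (𝓝 0) (𝓝 (X + (0 : 𝕜) • D)) :=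
    Continuous.tendsto (by fun_prop) 0
  have hy0 : Tendsto y (𝓝 0) (𝓝 0) := by
    simpa [hy] using (Continuous.tendsto (by fun_prop) 0 : Tendsto y (𝓝 0) (𝓝 (y 0)))
  have hexp : (fun t => exp (y t) - (1 + y t + (2⁻¹ : 𝕜) • (y t * y t))) =O[𝓝 0]
      fun t => t ^ 3 :=
    ((exp_sub_taylor_two_isBigO 𝕜).comp_tendsto hy0).trans
      ((isBigO_smul_self_of_tendsto id hyt).norm_left.pow 3)
  have hcross : ∀ t : 𝕜, 1 + y t + (2⁻¹ : 𝕜) • (y t * y t) -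
      (1 + t • X + t ^ 2 • (D + (2⁻¹ : 𝕜) • (X * X))) =
      t ^ 3 • ((2⁻¹ : 𝕜) • (X * D + D * X) + t • (2⁻¹ : 𝕜) • (D * D)) := by
    intro t
    simp only [hy, mul_add, add_mul, smul_mul_assoc, mul_smul_comm, smul_add, smul_smul]
    match_scalars <;> ring
  have hrest : (fun t : 𝕜 => t ^ 3 • ((2⁻¹ : 𝕜) • (X * D + D * X) + t • (2⁻¹ : 𝕜) • (D * D)))
      =O[𝓝 0] fun t => t ^ 3 :=
    isBigO_smul_self_of_tendsto _ (Continuous.tendsto (by fun_prop) 0)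
  refine (hexp.add (hrest.congr_left fun t => (hcross t).symm)).congr_left fun t => ?_
  simp only [hy, smul_add, smul_smul, ← pow_two]
  abel

lemma hasSecondOrderExpansion_exp_smul (X : 𝔸) :
    HasSecondOrderExpansion (fun t : 𝕜 => exp (t • X)) X ((2⁻¹ : 𝕜) • (X * X)) := by
  simpa using hasSecondOrderExpansion_exp (𝕜 := 𝕜) X 0

lemma HasSecondOrderExpansion.exp_half_mul_mul_exp_half {g : 𝕜 → 𝔸} {p R : 𝔸}
    (hg : HasSecondOrderExpansion g p ((2⁻¹ : 𝕜) • (p * p) + R)) (X : 𝔸) :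
    HasSecondOrderExpansion (fun t => exp ((t / 2) • X) * g t * exp ((t / 2) • X)) (X + p)
      ((2⁻¹ : 𝕜) • ((X + p) * (X + p)) + R) := by
  have hX : HasSecondOrderExpansion (fun t : 𝕜 => exp ((t / 2) • X)) ((2⁻¹ : 𝕜) • X)
      ((2⁻¹ : 𝕜) • ((2⁻¹ : 𝕜) • X * (2⁻¹ : 𝕜) • X)) := by
    simpa only [smul_smul, div_eq_mul_inv] using
      hasSecondOrderExpansion_exp_smul (𝕜 := 𝕜) ((2⁻¹ : 𝕜) • X)
  convert (hX.mul hg).mul hX using 1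
  · module
  · simp only [mul_add, add_mul, smul_mul_assoc, mul_smul_comm, smul_add, smul_smul]
    module

lemma hasSecondOrderExpansion_prod_ofFn_exp {m : ℕ} (O : Fin m → 𝔸) :
    HasSecondOrderExpansion (fun t : 𝕜 => (List.ofFn fun k => exp (t • O k)).prod) (∑ k, O k)
      ((2⁻¹ : 𝕜) • ((∑ k, O k) * ∑ k, O k) + (2⁻¹ : 𝕜) • orderedCommutatorSum O) := by
  induction m with
  | zero => simpa [orderedCommutatorSum] using hasSecondOrderExpansion_one
  | succ m ih =>
    convert (hasSecondOrderExpansion_exp_smul (O 0)).mul (ih fun k => O k.succ) using 1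
    · simp only [List.ofFn_succ, List.prod_cons]
    · exact Fin.sum_univ_succ O
    · rw [orderedCommutatorSum_succ, Fin.sum_univ_succ]
      simp only [mul_add, add_mul, smul_add, smul_sub]
      module

end Exponential

/-- first-order perturbation operator of the ABOBA splitting: the ABOBA
propagator `exp((t/2)A) exp((t/2)B) exp(tO₁)⋯exp(tO_m) exp((t/2)B) exp((t/2)A)` agrees with
`exp(t(A + B + ΣO_k) + (t²/2) Σ_{k<l} [O_k, O_l])` up to `O(t³)` as `t → 0`; in particular
the second-order term in the logarithm involves only commutators among the pairwise
operators `O_k`, with no contribution from `A` or `B`. -/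
theorem aboba_first_order_perturbation
    {𝔸 : Type*} [NormedRing 𝔸] [NormedAlgebra ℝ 𝔸] [CompleteSpace 𝔸]
    (A B : 𝔸) {m : ℕ} (O : Fin m → 𝔸) :
    (fun t : ℝ =>
        NormedSpace.exp ((t / 2) • A) * NormedSpace.exp ((t / 2) • B) *
            (List.ofFn fun k => NormedSpace.exp (t • O k)).prod *
            NormedSpace.exp ((t / 2) • B) * NormedSpace.exp ((t / 2) • A) -
          NormedSpace.exp (t • (A + B + ∑ k, O k) +
            (t ^ 2 / 2) • ∑ k, ∑ l, if k < l then O k * O l - O l * O k else 0))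
      =O[nhds (0 : ℝ)] fun t => t ^ 3 := by
  have hABOBA := ((hasSecondOrderExpansion_prod_ofFn_exp (𝕜 := ℝ) O).exp_half_mul_mul_exp_half
    B).exp_half_mul_mul_exp_half A
  have hExp := hasSecondOrderExpansion_exp (𝕜 := ℝ) (A + B + ∑ k, O k)
    ((2⁻¹ : ℝ) • orderedCommutatorSum O)
  rw [← add_assoc] at hABOBA
  rw [add_comm ((2⁻¹ : ℝ) • orderedCommutatorSum O)] at hExp
  refine (hABOBA.isBigO_sub hExp).congr_left fun t => ?_
  simp only [mul_assoc, smul_smul, div_eq_mul_inv, orderedCommutatorSum]
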